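/- Let ε_1, …, ε_m be i.i.d. random variables uniform on {−1, +1}, and for 0 ≤ j ≤ m let V⁺(j) = #{i ≤ j : ε_i = +1} and V⁻(j) = j − V⁺(j). For 0 ≤ i ≤ m define M_i = V⁺(m − i) / (1 + V⁻(m − i)) and let F_i be the σ-algebra generated by V⁺(m − i) together with ε_{m−i+1}, …, ε_m. Then (M_i)_{0 ≤ i ≤ m} is a supermartingale with respect to the filtration (F_i), and for every stopping time T with respect to (F_i) taking values in {0, …, m}, E[ M_T ] ≤ 1. -/

import Mathlib

open MeasureTheory Finset

/-- `V⁺(j)`: the number of the first `j` signs `ε_1, …, ε_j` that equal `+1`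
(with 1-based sign `ε_i` modelled as the 0-based entry `ε ⟨i-1⟩`). -/
def Vplus {Ω : Type*} {m : ℕ} (ε : Fin m → Ω → ℤ) (j : ℕ) (ω : Ω) : ℕ :=
  (univ.filter fun i : Fin m => (i : ℕ) < j ∧ ε i ω = 1).card

/-- `V⁻(j) = j − V⁺(j)`: the number of the first `j` signs that equal `−1`. -/
def Vminus {Ω : Type*} {m : ℕ} (ε : Fin m → Ω → ℤ) (j : ℕ) (ω : Ω) : ℕ :=
  j - Vplus ε j ω

/-!
Every quantity is a function of the sign vector `u = (ε_i)`, whose law is uniform on `{-1, 1}^m`,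
so integrals over `F`-measurable sets become averages over sets of sign vectors. Write
`n = m - k`. An `F k`-measurable set only sees the number `v` of `+1`s among the first `n` signs
and the signs after them, so it is invariant under permutations of the first `n` signs. Averaging
`M (k + 1)` over the transpositions of position `n - 1` with each of the first `n` positions gives
`(v / n) (v - 1) / (n + 1 - v) + ((n - v) / n) v / (n - v) ≤ v / (n + 1 - v)`, the value of `M k`
(with equality unless `v = n`); this is the supermartingale inequality. Optional stopping gives
`E[M_T] ≤ E[M_0]`, and `E[M_0] = 2⁻ᵐ ∑ C(m, v) v / (m + 1 - v) = 2⁻ᵐ ∑_{v < m} C(m, v) ≤ 1`.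
-/

open scoped ENNReal

namespace MeasureTheory

theorem Supermartingale.integral_stoppedValue_le {Ω : Type*} {m0 : MeasurableSpace Ω}
    {μ : Measure Ω} {𝒢 : Filtration ℕ m0} [SigmaFiniteFiltration μ 𝒢] {f : ℕ → Ω → ℝ}
    (hf : Supermartingale f 𝒢 μ) {τ : Ω → WithTop ℕ} (hτ : IsStoppingTime 𝒢 τ) {N : ℕ}
    (hbdd : ∀ ω, τ ω ≤ N) : ∫ ω, stoppedValue f τ ω ∂μ ≤ ∫ ω, f 0 ω ∂μ := by
  have h := hf.neg.expected_stoppedValue_mono (isStoppingTime_const 𝒢 0) hτ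
    (fun _ => zero_le) hbdd
  simp only [stoppedValue_neg, Pi.neg_apply, integral_neg, neg_le_neg_iff] at h
  exact h

end MeasureTheory

namespace SignRatio

variable {m : ℕ}

def plusCount (u : Fin m → ℤ) (j : ℕ) : ℕ :=
  #{i : Fin m | (i : ℕ) < j ∧ u i = 1}

noncomputable def signRatio (u : Fin m → ℤ) (j : ℕ) : ℝ :=
  plusCount u j / (1 + ((j - plusCount u j : ℕ) : ℝ))

theorem plusCount_le (u : Fin m → ℤ) (j : ℕ) : plusCount u j ≤ j :=
  calc plusCount u j ≤ #{i : Fin m | (i : ℕ) < j} :=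
        card_le_card <| monotone_filter_right _ fun _ _ h => h.1
    _ ≤ j := by rw [Fin.card_filter_val_lt]; exact min_le_right _ _

theorem plusCount_succ (u : Fin m → ℤ) {j : ℕ} (hj : j < m) :
    plusCount u (j + 1) = plusCount u j + if u ⟨j, hj⟩ = 1 then 1 else 0 := by
  simp only [plusCount, card_filter]
  rw [← Fintype.sum_ite_eq' (⟨j, hj⟩ : Fin m) fun i => if u i = 1 then 1 else 0,
    ← sum_add_distrib]
  refine sum_congr rfl fun i _ => ?_
  have := Fin.ext_iff (a := i) (b := ⟨j, hj⟩)
  split_ifs <;> simp_all <;> omega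

theorem val_swap_lt_iff {n : ℕ} {k l : Fin m} (hk : (k : ℕ) < n) (hl : (l : ℕ) < n) (i : Fin m) :
    (Equiv.swap k l i : ℕ) < n ↔ (i : ℕ) < n := by
  rcases eq_or_ne i k with rfl | hik
  · simp [hk, hl]
  rcases eq_or_ne i l with rfl | hil
  · simp [hk, hl]
  rw [Equiv.swap_apply_of_ne_of_ne hik hil]

theorem plusCount_comp_swap (u : Fin m → ℤ) {n : ℕ} {k l : Fin m} (hk : (k : ℕ) < n)
    (hl : (l : ℕ) < n) : plusCount (u ∘ Equiv.swap k l) n = plusCount u n := by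
  refine card_nbij' (Equiv.swap k l) (Equiv.swap k l) ?_ ?_ ?_ ?_ <;> intro i <;>
    simp [val_swap_lt_iff hk hl]

theorem card_filter_lt_and_ne_one (u : Fin m → ℤ) {n : ℕ} (hn : n ≤ m) :
    #{k : Fin m | (k : ℕ) < n ∧ ¬u k = 1} = n - plusCount u n := by
  have := card_filter_add_card_filter_not (s := ({k : Fin m | (k : ℕ) < n} : Finset _))
    (fun k => u k = 1)
  rw [filter_filter, filter_filter, Fin.card_filter_val_lt, min_eq_right hn] at this
  change plusCount u n + _ = n at this
  omega

/-- If `v` of the first `l + 1` signs are `+1`, removing one of the `v` pluses leaves the ratio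
`(v - 1) / (l + 2 - v)` and removing one of the `l + 1 - v` minuses leaves `v / (l + 1 - v)`. -/
theorem sum_ratio_remove_one_le (l v : ℕ) (hv : v ≤ l + 1) :
    (v : ℝ) * (((v - 1 : ℕ) : ℝ) / (1 + ((l + 1 - v : ℕ) : ℝ)))
        + ((l + 1 - v : ℕ) : ℝ) * ((v : ℝ) / (1 + ((l - v : ℕ) : ℝ)))
      ≤ (l + 1) * ((v : ℝ) / (1 + ((l + 1 - v : ℕ) : ℝ))) := by
  rcases hv.eq_or_lt with rfl | hv
  · simp only [Nat.sub_self, Nat.add_sub_cancel, CharP.cast_eq_zero, zero_mul, add_zero]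
    push_cast
    nlinarith
  rcases Nat.eq_zero_or_pos v with rfl | h0
  · simp
  have hv' : v ≤ l := Nat.lt_succ_iff.1 hv
  rw [Nat.cast_sub h0, Nat.cast_sub hv.le, Nat.cast_sub hv']
  push_cast
  have hpos : (0 : ℝ) < l + 1 - v := by
    have : (v : ℝ) < l + 1 := by exact_mod_cast hv
    linarith
  have hpos' : (0 : ℝ) < 1 + (l - v) := by linarith
  apply le_of_eq
  field_simp
  ring

theorem sum_signRatio_comp_swap_le (u : Fin m → ℤ) {l : ℕ} (hl : l < m) :
    ∑ k ∈ ({k : Fin m | (k : ℕ) < l + 1} : Finset _), signRatio (u ∘ Equiv.swap k ⟨l, hl⟩) l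
      ≤ (l + 1) * signRatio u (l + 1) := by
  obtain ⟨v, hv⟩ : ∃ v, plusCount u (l + 1) = v := ⟨_, rfl⟩
  have hterm : ∀ k : Fin m, (k : ℕ) < l + 1 → signRatio (u ∘ Equiv.swap k ⟨l, hl⟩) l =
      if u k = 1 then ((v - 1 : ℕ) : ℝ) / (1 + ((l + 1 - v : ℕ) : ℝ))
      else (v : ℝ) / (1 + ((l - v : ℕ) : ℝ)) := by
    intro k hk
    have hsucc := plusCount_succ (u ∘ Equiv.swap k ⟨l, hl⟩) hl
    rw [plusCount_comp_swap u hk (Nat.lt_succ_self l), hv] at hsucc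
    simp only [Function.comp_apply, Equiv.swap_apply_right] at hsucc
    unfold signRatio
    split_ifs at hsucc ⊢
    · rw [show plusCount (u ∘ Equiv.swap k ⟨l, hl⟩) l = v - 1 by omega,
        show l - (v - 1) = l + 1 - v by omega]
    · rw [show plusCount (u ∘ Equiv.swap k ⟨l, hl⟩) l = v by omega]
  rw [sum_congr rfl fun k hk => hterm k (mem_filter.1 hk).2, sum_ite, sum_const, sum_const,
    filter_filter, filter_filter, card_filter_lt_and_ne_one u hl, nsmul_eq_mul, nsmul_eq_mul]
  change (plusCount u (l + 1) : ℝ) * _ + _ ≤ _ * ((plusCount u (l + 1) : ℝ) / _)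
  rw [hv]
  exact_mod_cast sum_ratio_remove_one_le l v (hv ▸ plusCount_le u (l + 1))

theorem sum_signRatio_pred_le {S : Finset (Fin m → ℤ)} {n : ℕ} (hn : n ≤ m)
    (hS : ∀ u ∈ S, ∀ i j : Fin m, (i : ℕ) < n → (j : ℕ) < n → u ∘ Equiv.swap i j ∈ S) :
    ∑ u ∈ S, signRatio u (n - 1) ≤ ∑ u ∈ S, signRatio u n := by
  obtain _ | l := n
  · rfl
  have hl : l < m := hn
  set L : Fin m := ⟨l, hl⟩
  have hswap : ∀ k ∈ ({k : Fin m | (k : ℕ) < l + 1} : Finset _),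
      ∑ u ∈ S, signRatio (u ∘ Equiv.swap k L) l = ∑ u ∈ S, signRatio u l := by
    intro k hk
    have hS' := fun u hu => hS u hu k L (mem_filter.1 hk).2 l.lt_succ_self
    exact sum_nbij' (· ∘ Equiv.swap k L) (· ∘ Equiv.swap k L) hS' hS'
      (fun u _ => by ext; simp) (fun u _ => by ext; simp) fun _ _ => rfl
  rw [Nat.add_sub_cancel]
  refine le_of_mul_le_mul_left ?_ (show (0 : ℝ) < l + 1 by positivity)
  calc (l + 1 : ℝ) * ∑ u ∈ S, signRatio u l
      = ∑ k ∈ ({k : Fin m | (k : ℕ) < l + 1} : Finset _),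
          ∑ u ∈ S, signRatio (u ∘ Equiv.swap k L) l := by
        rw [sum_congr rfl hswap, sum_const, Fin.card_filter_val_lt, min_eq_right hn,
          nsmul_eq_mul, Nat.cast_succ]
    _ = ∑ u ∈ S, ∑ k ∈ ({k : Fin m | (k : ℕ) < l + 1} : Finset _),
          signRatio (u ∘ Equiv.swap k L) l := sum_comm
    _ ≤ ∑ u ∈ S, (l + 1 : ℝ) * signRatio u (l + 1) :=
        sum_le_sum fun u _ => sum_signRatio_comp_swap_le u hl
    _ = (l + 1 : ℝ) * ∑ u ∈ S, signRatio u (l + 1) := (mul_sum _ _ _).symm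

theorem choose_mul_ratio_le (m v : ℕ) :
    (m.choose (v + 1) : ℝ) * ((v + 1 : ℕ) / (1 + ((m - (v + 1) : ℕ) : ℝ))) ≤ m.choose v := by
  rcases lt_or_ge v m with hv | hv
  · have hden : 1 + ((m - (v + 1) : ℕ) : ℝ) = ((m - v : ℕ) : ℝ) := by
      rw [show m - v = m - (v + 1) + 1 by omega]; push_cast; ring
    have hpos : (0 : ℝ) < ((m - v : ℕ) : ℝ) := by exact_mod_cast Nat.sub_pos_of_lt hv
    rw [hden, ← mul_div_assoc, div_le_iff₀ hpos]
    exact_mod_cast (Nat.choose_succ_right_eq m v).le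
  · simp [Nat.choose_eq_zero_of_lt (Nat.lt_succ_of_le hv)]

theorem sum_choose_mul_ratio_le (m : ℕ) :
    ∑ v ∈ range (m + 1), (m.choose v : ℝ) * (v / (1 + ((m - v : ℕ) : ℝ))) ≤ 2 ^ m := by
  rw [sum_range_succ']
  calc ∑ v ∈ range m, (m.choose (v + 1) : ℝ) * ((v + 1 : ℕ) / (1 + ((m - (v + 1) : ℕ) : ℝ)))
        + (m.choose 0 : ℝ) * ((0 : ℕ) / (1 + ((m - 0 : ℕ) : ℝ)))
      ≤ ∑ v ∈ range (m + 1), (m.choose v : ℝ) := by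
        rw [Nat.cast_zero, zero_div, mul_zero, add_zero, sum_range_succ]
        exact le_add_of_le_of_nonneg (sum_le_sum fun v _ => choose_mul_ratio_le m v)
          (Nat.cast_nonneg _)
    _ = 2 ^ m := by exact_mod_cast Nat.sum_range_choose m

def signVectors (m : ℕ) : Finset (Fin m → ℤ) :=
  Fintype.piFinset fun _ => {-1, 1}

theorem mem_signVectors {u : Fin m → ℤ} : u ∈ signVectors m ↔ ∀ i, u i = -1 ∨ u i = 1 := by
  simp [signVectors]

theorem sum_signVectors_plusCount {β : Type*} [AddCommMonoid β] (g : ℕ → β) :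
    ∑ u ∈ signVectors m, g (plusCount u m) = ∑ v ∈ range (m + 1), m.choose v • g v := by
  have hcount : ∀ u : Fin m → ℤ, plusCount u m = #{i | u i = 1} := fun u =>
    congrArg card <| filter_congr fun i _ => and_iff_right i.isLt
  calc ∑ u ∈ signVectors m, g (plusCount u m) = ∑ A ∈ (univ : Finset (Fin m)).powerset, g #A := by
        refine sum_nbij' (fun u => univ.filter fun i => u i = 1)
          (fun A i => if i ∈ A then 1 else -1) (fun _ _ => mem_powerset.2 (subset_univ _)) (fun A _ => ?_) (fun u hu => ?_)
          (fun A _ => by ext; simp) fun u _ => by rw [hcount]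
        · simp only [mem_signVectors]
          intro i
          split_ifs <;> simp
        · ext i
          rcases mem_signVectors.1 hu i with h | h <;> simp [h]
    _ = ∑ v ∈ range (m + 1), m.choose v • g v := by
        rw [sum_powerset_apply_card, card_univ, Fintype.card_fin]

theorem sum_signRatio_le_two_pow (m : ℕ) : ∑ u ∈ signVectors m, signRatio u m ≤ 2 ^ m := by
  have h := sum_signVectors_plusCount (m := m) fun v => (v : ℝ) / (1 + ((m - v : ℕ) : ℝ))
  simp only [nsmul_eq_mul] at h
  exact h.trans_le (sum_choose_mul_ratio_le m)

noncomputable def uniformSigns (m : ℕ) : Measure (Fin m → ℤ) :=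
  ∑ u ∈ signVectors m, (2⁻¹ ^ m : ℝ≥0∞) • Measure.dirac u

theorem integrable_uniformSigns (H : (Fin m → ℤ) → ℝ) : Integrable H (uniformSigns m) :=
  integrable_finsetSum_measure.2 fun _ _ =>
    (integrable_dirac enorm_lt_top).smul_measure (by simp)

theorem integral_uniformSigns (H : (Fin m → ℤ) → ℝ) :
    ∫ u, H u ∂uniformSigns m = 2⁻¹ ^ m * ∑ u ∈ signVectors m, H u := by
  rw [uniformSigns, integral_finsetSum_measure fun _ _ =>
    (integrable_dirac enorm_lt_top).smul_measure (by simp), mul_sum]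
  simp [integral_smul_measure]

section Law

variable {Ω : Type*} [MeasurableSpace Ω] {P : Measure Ω}

theorem measure_preimage_singleton_eq_zero [IsProbabilityMeasure P] {X : Ω → ℤ}
    (hX : Measurable X) (hplus : P (X ⁻¹' {1}) = 1 / 2) (hminus : P (X ⁻¹' {-1}) = 1 / 2)
    {z : ℤ} (hz : z ≠ -1 ∧ z ≠ 1) :
    P (X ⁻¹' {z}) = 0 := by
  have hpm : P (X ⁻¹' {-1, 1}) = 1 := by
    rw [Set.insert_eq, Set.preimage_union, measure_union _ (hX (measurableSet_singleton 1)),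
      hplus, hminus, ENNReal.add_halves]
    exact Set.disjoint_singleton.2 (by decide) |>.preimage X
  refine measure_mono_null (fun ω hω => ?_)
    ((prob_compl_eq_zero_iff (hX MeasurableSet.of_discrete)).2 hpm)
  simp_all

theorem map_signVector_eq_uniformSigns [IsProbabilityMeasure P] {ε : Fin m → Ω → ℤ}
    (hmeas : ∀ i, Measurable (ε i)) (hindep : ProbabilityTheory.iIndepFun ε P)
    (hplus : ∀ i, P (ε i ⁻¹' {1}) = 1 / 2) (hminus : ∀ i, P (ε i ⁻¹' {-1}) = 1 / 2) :
    P.map (fun ω i => ε i ω) = uniformSigns m := by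
  refine Measure.ext_of_singleton fun u => ?_
  have hpre : (fun ω i => ε i ω) ⁻¹' {u} = ⋂ i, ε i ⁻¹' {u i} := by
    ext ω; simp [funext_iff]
  rw [Measure.map_apply (measurable_pi_lambda _ hmeas) (measurableSet_singleton u), hpre,
    hindep.meas_iInter fun i => ⟨{u i}, measurableSet_singleton _, rfl⟩, uniformSigns,
    Measure.finsetSum_apply]
  simp only [Measure.smul_apply, Measure.dirac_apply, smul_eq_mul, Set.indicator_apply,
    Set.mem_singleton_iff, Pi.one_apply, mul_ite, mul_one, mul_zero, sum_ite_eq']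
  split_ifs with hu
  · have hhalf : ∀ i, P (ε i ⁻¹' {u i}) = 2⁻¹ := fun i => by
      rcases mem_signVectors.1 hu i with h | h <;> rw [h, ← one_div]
      exacts [hminus i, hplus i]
    rw [Fintype.prod_congr _ _ hhalf, prod_const, card_univ, Fintype.card_fin]
  · obtain ⟨i, hi⟩ : ∃ i, u i ≠ -1 ∧ u i ≠ 1 := by simpa [mem_signVectors] using hu
    exact prod_eq_zero (mem_univ i)
      (measure_preimage_singleton_eq_zero (hmeas i) (hplus i) (hminus i) hi)

variable {X : Ω → Fin m → ℤ}

theorem integrable_comp_of_map_eq (hX : Measurable X) (hlaw : P.map X = uniformSigns m)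
    (H : (Fin m → ℤ) → ℝ) : Integrable (fun ω => H (X ω)) P :=
  (integrable_map_measure Measurable.of_discrete.aestronglyMeasurable hX.aemeasurable).1
    (hlaw ▸ integrable_uniformSigns H)

theorem integral_comp_of_map_eq (hX : Measurable X) (hlaw : P.map X = uniformSigns m)
    (H : (Fin m → ℤ) → ℝ) : ∫ ω, H (X ω) ∂P = 2⁻¹ ^ m * ∑ u ∈ signVectors m, H u := by
  rw [← integral_map hX.aemeasurable Measurable.of_discrete.aestronglyMeasurable, hlaw,
    integral_uniformSigns]

open Classical in
theorem setIntegral_comp_of_map_eq (hX : Measurable X) (hlaw : P.map X = uniformSigns m)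
    (H : (Fin m → ℤ) → ℝ) (A : Set (Fin m → ℤ)) :
    ∫ ω in X ⁻¹' A, H (X ω) ∂P = 2⁻¹ ^ m * ∑ u ∈ signVectors m with u ∈ A, H u := by
  rw [← integral_indicator (hX MeasurableSet.of_discrete)]
  have hind : (X ⁻¹' A).indicator (fun ω => H (X ω)) = fun ω => A.indicator H (X ω) :=
    funext fun _ => Set.indicator_comp_right X
  rw [hind, integral_comp_of_map_eq hX hlaw, sum_filter]
  simp only [Set.indicator_apply]

theorem setIntegral_signRatio_pred_le (hX : Measurable X) (hlaw : P.map X = uniformSigns m)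
    {n : ℕ} {A : Set (Fin m → ℤ)}
    (hA : ∀ u ∈ A, ∀ i j : Fin m, (i : ℕ) < n → (j : ℕ) < n → u ∘ Equiv.swap i j ∈ A)
    (hn : n ≤ m) :
    ∫ ω in X ⁻¹' A, signRatio (X ω) (n - 1) ∂P ≤ ∫ ω in X ⁻¹' A, signRatio (X ω) n ∂P := by
  classical
  rw [setIntegral_comp_of_map_eq hX hlaw (signRatio · (n - 1)),
    setIntegral_comp_of_map_eq hX hlaw (signRatio · n)]
  refine mul_le_mul_of_nonneg_left (sum_signRatio_pred_le hn fun u hu i j hi hj => ?_)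
    (by positivity)
  simp only [mem_filter, mem_signVectors] at hu ⊢
  exact ⟨fun l => hu.1 _, hA u hu.2 i j hi hj⟩

end Law

def plusCountAndTail (n : ℕ) (u : Fin m → ℤ) : ℕ × (Fin m → ℤ) :=
  (plusCount u n, fun j => if n ≤ (j : ℕ) then u j else 0)

theorem plusCountAndTail_comp_swap (u : Fin m → ℤ) {n : ℕ} {k l : Fin m} (hk : (k : ℕ) < n)
    (hl : (l : ℕ) < n) : plusCountAndTail n (u ∘ Equiv.swap k l) = plusCountAndTail n u := by
  refine Prod.ext (plusCount_comp_swap u hk hl) (funext fun j => ?_)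
  by_cases hj : n ≤ (j : ℕ)
  · simp only [plusCountAndTail, hj, if_true, Function.comp_apply]
    rw [Equiv.swap_apply_of_ne_of_ne] <;> rintro rfl <;> omega
  · simp [plusCountAndTail, hj]

theorem exists_swap_closed_preimage_eq {Ω : Type*} {ε : Fin m → Ω → ℤ} {n : ℕ} {s : Set Ω}
    (hs : MeasurableSet[MeasurableSpace.comap (fun ω => Vplus ε n ω) inferInstance ⊔
      ⨆ (j : Fin m) (_ : n ≤ (j : ℕ)), MeasurableSpace.comap (ε j) inferInstance] s) :
    ∃ A : Set (Fin m → ℤ), (∀ u ∈ A, ∀ i j : Fin m, (i : ℕ) < n → (j : ℕ) < n →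
      u ∘ Equiv.swap i j ∈ A) ∧ (fun ω i => ε i ω) ⁻¹' A = s := by
  have hle : MeasurableSpace.comap (fun ω => Vplus ε n ω) inferInstance ⊔
      ⨆ (j : Fin m) (_ : n ≤ (j : ℕ)), MeasurableSpace.comap (ε j) inferInstance ≤
      MeasurableSpace.comap (fun ω => plusCountAndTail n fun i => ε i ω) ⊤ := by
    refine sup_le ?_ (iSup₂_le fun j hj => ?_)
    · rintro _ ⟨A, -, rfl⟩
      exact ⟨Prod.fst ⁻¹' A, trivial, rfl⟩
    · rintro _ ⟨A, -, rfl⟩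
      refine ⟨(fun p => p.2 j) ⁻¹' A, trivial, ?_⟩
      ext ω
      simp [plusCountAndTail, hj]
  obtain ⟨B, -, rfl⟩ := hle s hs
  refine ⟨plusCountAndTail n ⁻¹' B, fun u hu i j hi hj => ?_, rfl⟩
  rwa [Set.mem_preimage, plusCountAndTail_comp_swap u hi hj]

end SignRatio

open SignRatio

/-- **The reversed-time sign ratio process is a supermartingale, and optional
stopping gives `E[M_T] ≤ 1`.**
Let `ε_1, …, ε_m` be i.i.d. random variables uniform on `{−1, +1}`, and for
`0 ≤ j ≤ m` let `V⁺(j) = #{i ≤ j : ε_i = +1}` and `V⁻(j) = j − V⁺(j)`.  For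
`0 ≤ i ≤ m` define `M_i = V⁺(m−i) / (1 + V⁻(m−i))` and let `F_i` be the σ-algebra
generated by `V⁺(m−i)` together with `ε_{m−i+1}, …, ε_m` (1-based indices, i.e. the
0-based entries `ε_j` with `m − i ≤ j`).  Then `(M_i)_{0 ≤ i ≤ m}` is a
supermartingale with respect to the filtration `(F_i)`, and for every stopping time
`T` with respect to `(F_i)` taking values in `{0, …, m}`, `E[ M_T ] ≤ 1`. -/
theorem sign_ratio_supermartingale_optional_stopping
    {Ω : Type*} [mΩ : MeasurableSpace Ω]
    (P : Measure Ω) [IsProbabilityMeasure P] (m : ℕ)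
    (ε : Fin m → Ω → ℤ) (hmeas : ∀ i, Measurable (ε i))
    (hindep : ProbabilityTheory.iIndepFun ε P)
    (hplus : ∀ i, P (ε i ⁻¹' {1}) = 1 / 2)
    (hminus : ∀ i, P (ε i ⁻¹' {-1}) = 1 / 2)
    (F : Filtration ℕ mΩ)
    (hF : ∀ i, F i =
      MeasurableSpace.comap (fun ω => Vplus ε (m - i) ω) inferInstance ⊔
        ⨆ (j : Fin m) (_ : m - i ≤ (j : ℕ)),
          MeasurableSpace.comap (ε j) inferInstance)
    (M : ℕ → Ω → ℝ)
    (hM : M = fun i ω =>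
      (Vplus ε (m - i) ω : ℝ) / (1 + (Vminus ε (m - i) ω : ℝ))) :
    Supermartingale M F P ∧
      ∀ T : Ω → ℕ, IsStoppingTime F (fun ω => (T ω : WithTop ℕ)) → (∀ ω, T ω ≤ m) →
        ∫ ω, stoppedValue M (fun ω => (T ω : WithTop ℕ)) ω ∂P ≤ 1 := by
  have hX : Measurable fun ω i => ε i ω := measurable_pi_lambda _ hmeas
  have hlaw := map_signVector_eq_uniformSigns hmeas hindep hplus hminus
  have hMk : ∀ k, M k = fun ω => signRatio (fun i => ε i ω) (m - k) := fun k => by subst hM; rfl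
  have hadapted : StronglyAdapted F M := fun k => by
    rw [hMk k]
    have hV : Measurable[F k] fun ω => Vplus ε (m - k) ω :=
      (comap_measurable _).mono (hF k ▸ le_sup_left) le_rfl
    exact ((Measurable.of_discrete (f := fun v : ℕ => (v : ℝ) / (1 + ((m - k - v : ℕ) : ℝ)))).comp
      hV).stronglyMeasurable
  have hsuper : Supermartingale M F P := by
    refine supermartingale_of_setIntegral_succ_le hadapted
      (fun k => hMk k ▸ integrable_comp_of_map_eq hX hlaw (signRatio · (m - k))) fun k s hs => ?_
    obtain ⟨A, hA, rfl⟩ := exists_swap_closed_preimage_eq (hF k ▸ hs)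
    simpa only [hMk, Nat.sub_add_eq] using setIntegral_signRatio_pred_le hX hlaw hA (Nat.sub_le m k)
  refine ⟨hsuper, fun T hT hTm => ?_⟩
  calc ∫ ω, stoppedValue M (fun ω => (T ω : WithTop ℕ)) ω ∂P
      ≤ ∫ ω, M 0 ω ∂P := hsuper.integral_stoppedValue_le hT fun ω => WithTop.coe_le_coe.2 (hTm ω)
    _ = 2⁻¹ ^ m * ∑ u ∈ signVectors m, signRatio u m := by
        rw [hMk]; exact integral_comp_of_map_eq hX hlaw (signRatio · m)
    _ ≤ 2⁻¹ ^ m * 2 ^ m := by gcongr; exact sum_signRatio_le_two_pow m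
    _ = 1 := by rw [← mul_pow]; norm_num
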